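/- arXiv:2002.01174 — 2 statements merged into one kernel-verified Lean document; each statement's English description precedes it below -/
import Mathlib

section
/- For every smooth vector field X : ℝ³ → ℝ³, rot₂( L X ) = L( rot₁ X ) holds identically on ℝ³ (equality of symmetric-matrix fields). -/
open MeasureTheory
open scoped BigOperators

/-- Partial derivative in the `i`-th coordinate direction on `ℝ³`. -/
noncomputable def pd (i : Fin 3) (f : (Fin 3 → ℝ) → ℝ) : (Fin 3 → ℝ) → ℝ :=
  fun x => fderiv ℝ f x (Pi.single i 1)

/-- The Levi-Civita symbol `ε_{ijk}` on three indices. -/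
def eps : Fin 3 → Fin 3 → Fin 3 → ℝ := fun i j k =>
  if (i, j, k) = ((0 : Fin 3), (1 : Fin 3), (2 : Fin 3)) ∨
     (i, j, k) = ((1 : Fin 3), (2 : Fin 3), (0 : Fin 3)) ∨
     (i, j, k) = ((2 : Fin 3), (0 : Fin 3), (1 : Fin 3)) then 1
  else if (i, j, k) = ((2 : Fin 3), (1 : Fin 3), (0 : Fin 3)) ∨
     (i, j, k) = ((1 : Fin 3), (0 : Fin 3), (2 : Fin 3)) ∨
     (i, j, k) = ((0 : Fin 3), (2 : Fin 3), (1 : Fin 3)) then -1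
  else 0

/-- The Kronecker delta `δ_{ij}`. -/
def kdelta (i j : Fin 3) : ℝ := if i = j then 1 else 0

/-- Scalar fields on `ℝ³`. -/
abbrev Fld := (Fin 3 → ℝ) → ℝ

/-- Vector fields on `ℝ³`, given by their components. -/
abbrev VecFld := Fin 3 → Fld

/-- (Symmetric-)matrix fields on `ℝ³`, given by their components. -/
abbrev MatFld := Fin 3 → Fin 3 → Fld

/-- `(rot₁ X)_i = Σ_{j,k} ε_{ijk} ∂_j X_k`. -/
noncomputable def rot1 (X : VecFld) : VecFld := fun i x => ∑ j, ∑ k, eps i j k * pd j (X k) x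

/-- `div₁ X = Σ_i ∂_i X_i`. -/
noncomputable def div1 (X : VecFld) : Fld := fun x => ∑ i, pd i (X i) x

/-- `(div₂ h)_i = Σ_j ∂_j h_{ij}`. -/
noncomputable def div2 (h : MatFld) : VecFld := fun i x => ∑ j, pd j (h i j) x

/-- `(rot₂ h)_{ij} = Σ_{k,ℓ} ( ε_{kℓi} ∂_k h_{ℓj} + ε_{kℓj} ∂_k h_{ℓi} )`. -/
noncomputable def rot2 (h : MatFld) : MatFld :=
  fun i j x => ∑ k, ∑ l, (eps k l i * pd k (h l j) x + eps k l j * pd k (h l i) x)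

/-- The conformal Killing operator
`(L X)_{ij} = ∂_i X_j + ∂_j X_i − (2/3) δ_{ij} Σ_k ∂_k X_k`. -/
noncomputable def Lop (X : VecFld) : MatFld :=
  fun i j x => pd i (X j) x + pd j (X i) x - (2/3) * kdelta i j * div1 X x

/- ### Auxiliary lemmas -/

lemma pd_contDiff {f : Fld} (hf : ContDiff ℝ (⊤ : ℕ∞) f) (i : Fin 3) :
    ContDiff ℝ (⊤ : ℕ∞) (pd i f) :=
  (hf.fderiv_right (by simp)).clm_apply contDiff_const

lemma pd_comm {f : Fld} (hf : ContDiff ℝ (⊤ : ℕ∞) f) (a b : Fin 3) (x : Fin 3 → ℝ) :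
    pd a (pd b f) x = pd b (pd a f) x := by
  have hd : Differentiable ℝ f := hf.differentiable (by simp)
  have hd' : Differentiable ℝ (fderiv ℝ f) := (hf.fderiv_right (m := 1) (by exact WithTop.coe_le_coe.mpr le_top)).differentiable (by simp)
  have hsymm := second_derivative_symmetric (f := f) (f' := fderiv ℝ f)
    (f'' := fderiv ℝ (fderiv ℝ f) x) (fun y => (hd y).hasFDerivAt) ((hd' x).hasFDerivAt)
  have key : ∀ v w : Fin 3 → ℝ,
      fderiv ℝ (fun y => fderiv ℝ f y w) x v = fderiv ℝ (fderiv ℝ f) x v w := by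
    intro v w
    rw [fderiv_clm_apply (hd' x) (differentiableAt_const w)]
    simp
  unfold pd
  rw [key, key, hsymm]

lemma pd_add {f g : Fld} {x : Fin 3 → ℝ} (hf : DifferentiableAt ℝ f x)
    (hg : DifferentiableAt ℝ g x) (i : Fin 3) :
    pd i (fun y => f y + g y) x = pd i f x + pd i g x := by
  unfold pd; rw [fderiv_fun_add hf hg]; simp

lemma pd_sub {f g : Fld} {x : Fin 3 → ℝ} (hf : DifferentiableAt ℝ f x)
    (hg : DifferentiableAt ℝ g x) (i : Fin 3) :
    pd i (fun y => f y - g y) x = pd i f x - pd i g x := by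
  unfold pd; rw [fderiv_fun_sub hf hg]; simp

lemma pd_cmul {f : Fld} {x : Fin 3 → ℝ} (c : ℝ) (hf : DifferentiableAt ℝ f x) (i : Fin 3) :
    pd i (fun y => c * f y) x = c * pd i f x := by
  unfold pd; rw [fderiv_const_mul hf]; simp

lemma pd_sum {f : Fin 3 → Fld} {x : Fin 3 → ℝ}
    (hf : ∀ m, DifferentiableAt ℝ (f m) x) (i : Fin 3) :
    pd i (fun y => ∑ m, f m y) x = ∑ m, pd i (f m) x := by
  unfold pd; rw [fderiv_fun_sum (fun m _ => hf m)]; simp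

lemma pd_Lop (X : VecFld) (hX : ∀ i, ContDiff ℝ (⊤ : ℕ∞) (X i)) (k l j : Fin 3) (x : Fin 3 → ℝ) :
    pd k (Lop X l j) x = pd k (pd l (X j)) x + pd k (pd j (X l)) x
      - 2/3 * kdelta l j * ∑ m, pd k (pd m (X m)) x := by
  have hd : ∀ a b : Fin 3, Differentiable ℝ (pd a (X b)) :=
    fun a b => (pd_contDiff (hX b) a).differentiable (by simp)
  have hdiv : Differentiable ℝ (div1 X) := by
    unfold div1; exact Differentiable.fun_sum (fun m _ => hd m m)
  have e1 : Lop X l j = fun y => (fun z => pd l (X j) z + pd j (X l) z) y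
      - (fun z => (2/3 * kdelta l j) * div1 X z) y := rfl
  rw [e1, pd_sub (f := fun z => pd l (X j) z + pd j (X l) z) (((hd l j).add (hd j l)) x) (((hdiv.const_mul _) x)) k,
    pd_add ((hd l j) x) ((hd j l) x) k, pd_cmul _ (hdiv x) k]
  have : pd k (div1 X) x = ∑ m, pd k (pd m (X m)) x := by
    have : div1 X = fun y => ∑ m, pd m (X m) y := rfl
    rw [this, pd_sum (fun m => (hd m m) x) k]
  rw [this]

lemma pd_rot1 (X : VecFld) (hX : ∀ i, ContDiff ℝ (⊤ : ℕ∞) (X i)) (a b : Fin 3) (x : Fin 3 → ℝ) :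
    pd a (rot1 X b) x = ∑ c, ∑ d, eps b c d * pd a (pd c (X d)) x := by
  have hd : ∀ a b : Fin 3, Differentiable ℝ (pd a (X b)) :=
    fun a b => (pd_contDiff (hX b) a).differentiable (by simp)
  have e1 : rot1 X b = fun y => ∑ c, (fun z => ∑ d, (fun w => eps b c d * pd c (X d) w) z) y := rfl
  rw [e1, pd_sum (fun c => (Differentiable.fun_sum
      (fun d _ => (hd c d).const_mul (eps b c d))) x) a]
  refine Finset.sum_congr rfl fun c _ => ?_
  rw [pd_sum (fun d => ((hd c d).const_mul (eps b c d)) x) a]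
  exact Finset.sum_congr rfl fun d _ => pd_cmul _ ((hd c d) x) a

set_option maxHeartbeats 1000000 in
/-- `rot₂( L X ) = L( rot₁ X )` for every smooth vector field `X` on `ℝ³`. -/
theorem stmt4 (X : VecFld)
    (hX_smooth : ∀ i, ContDiff ℝ (⊤ : ℕ∞) (X i)) :
    ∀ (i j : Fin 3) (x : Fin 3 → ℝ), rot2 (Lop X) i j x = Lop (rot1 X) i j x := by
  intro i j x
  obtain ⟨D, hD, hS⟩ : ∃ D : Fin 3 → Fin 3 → Fin 3 → ℝ,
      (∀ a b c, pd a (pd b (X c)) x = D a b c) ∧ (∀ a b c, D a b c = D b a c) :=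
    ⟨fun a b c => pd a (pd b (X c)) x, fun _ _ _ => rfl,
      fun a b c => pd_comm (hX_smooth c) a b x⟩
  have h10 : ∀ c, D 1 0 c = D 0 1 c := fun c => hS 1 0 c
  have h20 : ∀ c, D 2 0 c = D 0 2 c := fun c => hS 2 0 c
  have h21 : ∀ c, D 2 1 c = D 1 2 c := fun c => hS 2 1 c
  simp only [rot2, pd_Lop X hX_smooth]
  simp only [Lop, div1, pd_rot1 X hX_smooth]
  simp only [Fin.sum_univ_three, hD]
  have hi : i = 0 ∨ i = 1 ∨ i = 2 := by revert i; decide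
  have hj : j = 0 ∨ j = 1 ∨ j = 2 := by revert j; decide
  rcases hi with rfl | rfl | rfl <;> rcases hj with rfl | rfl | rfl <;>
    · simp only [eps, kdelta, Prod.mk.injEq]
      simp only [show ((0:Fin 3) = 1) = False from by simp, show ((0:Fin 3) = 2) = False from by simp,
        show ((1:Fin 3) = 0) = False from by simp, show ((1:Fin 3) = 2) = False from by simp,
        show ((2:Fin 3) = 0) = False from by simp, show ((2:Fin 3) = 1) = False from by simp,
        if_true, if_false, false_and, and_false, true_and, and_true, false_or, or_false,
        or_true, true_or, eq_self_iff_true, if_pos rfl]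
      simp only [h10, h20, h21]
      ring
end

section
/- Let k ∈ ℝ³ be nonzero and let h be a trace-free real symmetric 3×3 matrix. Then σ_k(rot₂)(h) = 0 if and only if h is a scalar multiple of the matrix 3 k⊗k − |k|² I; that is, the kernel of the symbol of rot₂ on trace-free symmetric matrices equals the image of the symbol of L d, which is span{3 k⊗k − |k|² I}. -/
/-!
Let `K = crossMatrix k` be the matrix of `v ↦ k ⨯₃ v`, so that `σ_k(rot₂)(h) = K h + (K h)ᵀ`:
the symbol vanishes iff `K h` is skew, i.e. `K h = crossMatrix w` for some `w`. As `kᵀ K = 0`,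
this forces `w ⨯₃ k = 0`, so `w = μ k` and `K (h - μ I) = 0`. For symmetric `N = h - μ I`
transposing gives `N K = 0` as well, and `K² = k kᵀ - |k|² I` turns the two equations into
`|k|⁴ N = k kᵀ N k kᵀ = (kᵀ N k) k kᵀ`. Hence `h ∈ span {I, k kᵀ}`, and the trace condition
selects the multiples of `3 k kᵀ - |k|² I`.
-/

open scoped BigOperators

/-- The cross product on `ℝ³`: `(a × b)_i = Σ_{j,l} ε_{ijl} a_j b_l`. -/
def cross (a b : Fin 3 → ℝ) : Fin 3 → ℝ := fun i => ∑ j, ∑ l, eps i j l * a j * b l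

/-- The symbol of `rot₂`:
`(σ_k(rot₂)(h))_{ij} = Σ_{ℓ,m} ( ε_{iℓm} k_ℓ h_{mj} + ε_{jℓm} k_ℓ h_{mi} )`. -/
def sigRot2 (k : Fin 3 → ℝ) (h : Fin 3 → Fin 3 → ℝ) : Fin 3 → Fin 3 → ℝ :=
  fun i j => ∑ l, ∑ m, (eps i l m * k l * h m j + eps j l m * k l * h m i)

open Matrix

section CrossMatrix

variable {K : Type*}

section CommRing

variable [CommRing K]

def crossMatrix (w : Fin 3 → K) : Matrix (Fin 3) (Fin 3) K :=
  !![0, -w 2, w 1; w 2, 0, -w 0; -w 1, w 0, 0]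

theorem crossMatrix_mulVec (w v : Fin 3 → K) : crossMatrix w *ᵥ v = w ⨯₃ v := by
  ext i
  fin_cases i <;> simp [crossMatrix, cross_apply, mulVec, dotProduct, Fin.sum_univ_three] <;> ring

theorem crossMatrix_transpose (w : Fin 3 → K) : (crossMatrix w)ᵀ = -crossMatrix w := by
  ext i j
  fin_cases i <;> fin_cases j <;> simp [crossMatrix]

theorem crossMatrix_smul (c : K) (w : Fin 3 → K) :
    crossMatrix (c • w) = c • crossMatrix w := by
  ext i j
  fin_cases i <;> fin_cases j <;> simp [crossMatrix]

theorem crossMatrix_mul_self (w : Fin 3 → K) :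
    crossMatrix w * crossMatrix w = vecMulVec w w - (w ⬝ᵥ w) • 1 := by
  ext i j
  fin_cases i <;> fin_cases j <;>
    simp [crossMatrix, vecMulVec_apply, vec3_dotProduct, mul_apply, Fin.sum_univ_three] <;> ring

theorem crossMatrix_mul_vecMulVec_self (w v : Fin 3 → K) :
    crossMatrix w * vecMulVec w v = 0 := by
  rw [mul_vecMulVec, crossMatrix_mulVec, cross_self]
  exact zero_vecMulVec v

theorem vecMul_crossMatrix_self (w : Fin 3 → K) : w ᵥ* crossMatrix w = 0 := by
  rw [← mulVec_transpose, crossMatrix_transpose, neg_mulVec, crossMatrix_mulVec, cross_self,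
    neg_zero]

end CommRing

theorem exists_eq_crossMatrix_of_transpose_eq_neg [CommRing K] [NoZeroDivisors K] [CharZero K]
    {M : Matrix (Fin 3) (Fin 3) K} (hM : Mᵀ = -M) : ∃ w, M = crossMatrix w := by
  have hM' : ∀ i j, M i j = -M j i := fun i j => by
    rw [← neg_apply, ← hM, transpose_apply]
  have hdiag : ∀ i, M i i = 0 := fun i => CharZero.eq_neg_self_iff.mp (hM' i i)
  refine ⟨![M 2 1, M 0 2, M 1 0], ?_⟩
  ext i j
  fin_cases i <;> fin_cases j <;> simp [crossMatrix, hdiag, hM' 0 1, hM' 0 2, hM' 1 2]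

theorem exists_smul_eq_of_cross_eq_zero [Field K] {k v : Fin 3 → K} (hk : k ≠ 0)
    (hv : k ⨯₃ v = 0) : ∃ c : K, c • k = v := by
  by_contra! hne
  exact crossProduct_ne_zero_iff_linearIndependent.mpr
    ((LinearIndependent.pair_iff' hk).mpr hne) hv

theorem exists_crossMatrix_mul_eq_smul [Field K] [CharZero K] {k : Fin 3 → K} (hk : k ≠ 0)
    {H : Matrix (Fin 3) (Fin 3) K} (hH : (crossMatrix k * H)ᵀ = -(crossMatrix k * H)) :
    ∃ μ : K, crossMatrix k * H = μ • crossMatrix k := by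
  obtain ⟨w, hw⟩ := exists_eq_crossMatrix_of_transpose_eq_neg hH
  have hkH : (crossMatrix k * H) *ᵥ k = 0 := by
    rw [← neg_neg (crossMatrix k * H), ← hH, neg_mulVec, mulVec_transpose, ← vecMul_vecMul,
      vecMul_crossMatrix_self, zero_vecMul, neg_zero]
  rw [hw, crossMatrix_mulVec, ← cross_anticomm, neg_eq_zero] at hkH
  obtain ⟨μ, rfl⟩ := exists_smul_eq_of_cross_eq_zero hk hkH
  exact ⟨μ, hw.trans (crossMatrix_smul μ k)⟩

theorem exists_eq_smul_vecMulVec_of_crossMatrix_mul_eq_zero [Field K] {k : Fin 3 → K}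
    (hk : k ⬝ᵥ k ≠ 0) {N : Matrix (Fin 3) (Fin 3) K} (hN : Nᵀ = N)
    (hkN : crossMatrix k * N = 0) : ∃ ν : K, N = ν • vecMulVec k k := by
  have hNk : N * crossMatrix k = 0 := by
    rw [← neg_eq_zero, ← mul_neg, ← crossMatrix_transpose, ← hN, ← transpose_mul, hkN,
      transpose_zero]
  have hsmul_one : (k ⬝ᵥ k) • (1 : Matrix (Fin 3) (Fin 3) K) =
      vecMulVec k k - crossMatrix k * crossMatrix k := by
    rw [crossMatrix_mul_self, sub_sub_cancel]
  have hleft : (k ⬝ᵥ k) • N = vecMulVec k k * N := by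
    rw [← one_mul N, ← smul_mul_assoc, hsmul_one, sub_mul, mul_assoc, hkN, mul_zero, sub_zero,
      one_mul]
  have hright : (k ⬝ᵥ k) • N = N * vecMulVec k k := by
    rw [← mul_one N, ← mul_smul_comm, hsmul_one, mul_sub, ← mul_assoc, hNk, zero_mul, sub_zero,
      mul_one]
  have hsq : (k ⬝ᵥ k) ^ 2 • N = (k ᵥ* N ⬝ᵥ k) • vecMulVec k k := by
    rw [sq, mul_smul, hleft, ← mul_smul_comm, hright, ← mul_assoc, vecMulVec_mul,
      vecMulVec_mul_vecMulVec, vecMulVec_smul]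
  refine ⟨(k ᵥ* N ⬝ᵥ k) / (k ⬝ᵥ k) ^ 2, ?_⟩
  rw [div_eq_inv_mul, mul_smul, ← hsq, smul_smul, inv_mul_cancel₀ (pow_ne_zero 2 hk), one_smul]

end CrossMatrix

theorem sigRot2_eq_add_transpose (k : Fin 3 → ℝ) (h : Matrix (Fin 3) (Fin 3) ℝ) :
    sigRot2 k h = crossMatrix k * h + (crossMatrix k * h)ᵀ := by
  ext i j
  fin_cases i <;> fin_cases j <;>
    simp [sigRot2, eps, crossMatrix, vecMul, dotProduct, Fin.sum_univ_three] <;> ring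

theorem sigRot2_smul_one_add_smul_vecMulVec (k : Fin 3 → ℝ) (μ ν : ℝ) :
    sigRot2 k (μ • (1 : Matrix (Fin 3) (Fin 3) ℝ) + ν • vecMulVec k k) = 0 := by
  rw [sigRot2_eq_add_transpose, mul_add, mul_smul_comm, mul_one, mul_smul_comm,
    crossMatrix_mul_vecMulVec_self, smul_zero, add_zero, transpose_smul, crossMatrix_transpose,
    smul_neg, add_neg_cancel]
  rfl

theorem sigRot2_eq_zero_iff {k : Fin 3 → ℝ} (hk : k ≠ 0) {H : Matrix (Fin 3) (Fin 3) ℝ}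
    (hH : Hᵀ = H) : sigRot2 k H = 0 ↔ ∃ μ ν : ℝ, H = μ • 1 + ν • vecMulVec k k := by
  refine ⟨fun hz => ?_, fun ⟨μ, ν, hμν⟩ => hμν ▸ sigRot2_smul_one_add_smul_vecMulVec k μ ν⟩
  have hKH : (crossMatrix k * H)ᵀ = -(crossMatrix k * H) :=
    eq_neg_of_add_eq_zero_right ((sigRot2_eq_add_transpose k H).symm.trans hz)
  obtain ⟨μ, hμ⟩ := exists_crossMatrix_mul_eq_smul hk hKH
  obtain ⟨ν, hν⟩ := exists_eq_smul_vecMulVec_of_crossMatrix_mul_eq_zero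
    (dotProduct_self_eq_zero.not.mpr hk) (N := H - μ • 1)
    (by rw [transpose_sub, transpose_smul, transpose_one, hH])
    (by rw [mul_sub, hμ, mul_smul_comm, mul_one, sub_self])
  exact ⟨μ, ν, eq_add_of_sub_eq' hν⟩

theorem smul_one_add_smul_vecMulVec_apply (k : Fin 3 → ℝ) (μ ν : ℝ) (i j : Fin 3) :
    (μ • (1 : Matrix (Fin 3) (Fin 3) ℝ) + ν • vecMulVec k k) i j =
      μ * kdelta i j + ν * (k i * k j) := by
  simp [kdelta, one_apply, vecMulVec_apply]

/-- for `k ≠ 0` and trace-free symmetric `h`, `σ_k(rot₂)(h) = 0` iff `h`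
is a scalar multiple of `3 k⊗k − |k|² I`; the kernel of the symbol of `rot₂` on
trace-free symmetric matrices equals the image of the symbol of `L d`. -/
theorem stmt12 (k : Fin 3 → ℝ) (hk : k ≠ 0) (h : Fin 3 → Fin 3 → ℝ)
    (h_symm : ∀ i j, h i j = h j i) (h_tracefree : ∑ i, h i i = 0) :
    (∀ i j, sigRot2 k h i j = 0) ↔
      ∃ c : ℝ, ∀ i j, h i j = c * (3 * k i * k j - (∑ l, k l ^ 2) * kdelta i j) := by
  have hnorm : ∑ l, k l ^ 2 = k ⬝ᵥ k := by simp [dotProduct, sq]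
  have hsymm : (of h)ᵀ = of h := ext fun i j => h_symm j i
  have hsig : (∀ i j, sigRot2 k h i j = 0) ↔ sigRot2 k (of h) = 0 := by
    simp only [funext_iff]
    rfl
  rw [hsig, sigRot2_eq_zero_iff hk hsymm]
  constructor
  · rintro ⟨μ, ν, hμν⟩
    have htrace : μ * 3 + ν * (k ⬝ᵥ k) = 0 := by
      have : trace (of h) = 0 := h_tracefree
      simpa [hμν, trace_add, trace_smul, trace_vecMulVec] using this
    refine ⟨ν / 3, fun i j => ?_⟩
    rw [← of_apply h i j, hμν, smul_one_add_smul_vecMulVec_apply, hnorm]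
    linear_combination kdelta i j / 3 * htrace
  · rintro ⟨c, hc⟩
    refine ⟨-c * (k ⬝ᵥ k), 3 * c, ext fun i j => ?_⟩
    rw [of_apply, hc, hnorm, smul_one_add_smul_vecMulVec_apply]
    ring
end
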